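/- arXiv:2109.10262 — 2 statements merged into one kernel-verified Lean document; each statement's English description precedes it below -/
import Mathlib

section
/- Let R be a linearly ordered commutative ring, let p be a univariate polynomial over R of degree at most n, and let t₁ ≤ t₂ in R. Suppose that for every k with 1 ≤ k ≤ n, the k-th iterated formal derivative of p evaluated at t₁ is nonnegative. Then p(t₁) ≤ p(t₂). In particular, every polynomial of degree n over an ordered commutative ring is n-smooth: it cannot decrease across any interval on which its formal derivatives of order up to n are nonnegative. -/
/-! Taylor expansion at `t₁` gives
`p(t₂) = p(t₁) + ∑_{1 ≤ k ≤ deg p} (D⁽ᵏ⁾p)(t₁) (t₂ - t₁)^k` in terms of the Hasse derivatives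
`D⁽ᵏ⁾ = ∂ᵏ / k!`, which make sense without dividing by `k!` in `R`. Since `k! > 0`, `(D⁽ᵏ⁾p)(t₁)`
has the sign of `(∂ᵏp)(t₁)`, so every term of the sum is nonnegative. -/

namespace Polynomial

open scoped Nat

theorem eval_add_eq_sum_hasseDeriv {R : Type*} [CommSemiring R] (p : R[X]) (a h : R) :
    p.eval (h + a) = ∑ k ∈ Finset.range (p.natDegree + 1), (hasseDeriv k p).eval a * h ^ k := by
  rw [← taylor_eval, eval_eq_sum_range, natDegree_taylor]
  simp only [taylor_coeff]

theorem factorial_mul_eval_hasseDeriv {R : Type*} [Semiring R] (k : ℕ) (p : R[X]) (a : R) :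
    (k ! : R) * (hasseDeriv k p).eval a = ((⇑derivative)^[k] p).eval a := by
  rw [← factorial_smul_hasseDeriv, LinearMap.smul_apply, eval_smul, nsmul_eq_mul]

theorem eval_hasseDeriv_nonneg_iff {R : Type*} [Semiring R] [LinearOrder R]
    [IsStrictOrderedRing R] (k : ℕ) (p : R[X]) (a : R) :
    0 ≤ (hasseDeriv k p).eval a ↔ 0 ≤ ((⇑derivative)^[k] p).eval a := by
  rw [← factorial_mul_eval_hasseDeriv]
  exact (mul_nonneg_iff_of_pos_left (by positivity)).symm

theorem eval_le_eval_of_eval_hasseDeriv_nonneg {R : Type*} [CommRing R] [PartialOrder R]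
    [IsOrderedRing R] {p : R[X]} {a b : R}
    (hd : ∀ k, 1 ≤ k → k ≤ p.natDegree → 0 ≤ (hasseDeriv k p).eval a) (hab : a ≤ b) :
    p.eval a ≤ p.eval b := by
  have hterm : ∀ k ∈ Finset.range p.natDegree,
      0 ≤ (hasseDeriv (k + 1) p).eval a * (b - a) ^ (k + 1) := fun k hk =>
    mul_nonneg (hd (k + 1) le_add_self (Finset.mem_range.mp hk))
      (pow_nonneg (sub_nonneg.mpr hab) _)
  calc p.eval a
      ≤ p.eval a + ∑ k ∈ Finset.range p.natDegree,
          (hasseDeriv (k + 1) p).eval a * (b - a) ^ (k + 1) :=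
        le_add_of_nonneg_right (Finset.sum_nonneg hterm)
    _ = p.eval b := by
        rw [← sub_add_cancel b a, eval_add_eq_sum_hasseDeriv, Finset.sum_range_succ',
          add_sub_cancel_right]
        simp [add_comm]

end Polynomial

/-- A polynomial of degree at most `n` over a linearly ordered commutative ring is
`n`-smooth: if all of its iterated formal derivatives of order `1 ≤ k ≤ n` are nonnegative
at `t₁`, then `p(t₁) ≤ p(t₂)` whenever `t₁ ≤ t₂`. -/
theorem poly_n_smooth {R : Type*} [CommRing R] [LinearOrder R] [IsStrictOrderedRing R]
    (n : ℕ) (p : Polynomial R) (hp : p.natDegree ≤ n)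
    (t₁ t₂ : R) (ht : t₁ ≤ t₂)
    (hd : ∀ k, 1 ≤ k → k ≤ n → 0 ≤ ((⇑Polynomial.derivative)^[k] p).eval t₁) :
    p.eval t₁ ≤ p.eval t₂ :=
  Polynomial.eval_le_eval_of_eval_hasseDeriv_nonneg
    (fun k hk hkp => (Polynomial.eval_hasseDeriv_nonneg_iff k p t₁).mpr (hd k hk (hkp.trans hp)))
    ht
end

section
/- Let R be a linearly ordered commutative ring, let n be a positive integer, let l be a multivariate polynomial in n variables over R, and let s₁, …, sₙ be univariate polynomials over R satisfying dsᵢ/dt = −(∂l/∂xᵢ)(s) for every i. Then for every t ∈ R, the formal derivative of the composite l(s), evaluated at t, is ≤ 0. That is, the R-polynomial domain supports generalized gradient-based optimization: every generalized gradient flow is a 1-descending flow. -/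
open Polynomial MvPolynomial

namespace MvPolynomial

variable {R σ : Type*} [CommSemiring R] [Fintype σ]

theorem derivative_aeval_eq_sum_pderiv (s : σ → R[X]) (l : MvPolynomial σ R) :
    derivative (aeval s l) = ∑ i, aeval s (pderiv i l) * derivative (s i) := by
  classical
  induction l using MvPolynomial.induction_on with
  | C a => simp
  | add p q hp hq => simp [hp, hq, Finset.sum_add_distrib, add_mul]
  | mul_X p i hp =>
    simp only [map_mul, aeval_X, Polynomial.derivative_mul, hp, Derivation.leibniz, pderiv_X,
      smul_eq_mul, mul_ite, mul_one, mul_zero, apply_ite (aeval s), map_zero, ite_mul, zero_mul,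
      map_add, add_mul, Finset.sum_add_distrib, Finset.sum_ite_eq, Finset.mem_univ, if_true,
      Finset.sum_mul, Pi.single_apply]
    rw [add_comm]
    exact congrArg _ (Finset.sum_congr rfl fun _ _ => by ring)

end MvPolynomial

theorem derivative_aeval_eq_neg_sum_sq_of_gradient_flow {R σ : Type*} [CommRing R] [Fintype σ]
    (l : MvPolynomial σ R) (s : σ → R[X])
    (hs : ∀ i, derivative (s i) = -aeval s (pderiv i l)) :
    derivative (aeval s l) = -∑ i, aeval s (pderiv i l) ^ 2 := by
  simp [derivative_aeval_eq_sum_pderiv, hs, sq]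

theorem formal_gradient_flow_descending_general {R : Type*} [CommRing R] [LinearOrder R] [IsStrictOrderedRing R]
    {n : ℕ}
    (l : MvPolynomial (Fin n) R) (s : Fin n → Polynomial R)
    (hs : ∀ i, Polynomial.derivative (s i) =
      -(MvPolynomial.aeval s (MvPolynomial.pderiv i l))) :
    ∀ t : R, (Polynomial.derivative (MvPolynomial.aeval s l)).eval t ≤ 0 := by
  intro t
  rw [derivative_aeval_eq_neg_sum_sq_of_gradient_flow l s hs, Polynomial.eval_neg, eval_finsetSum,
    neg_nonpos]
  exact Finset.sum_nonneg fun i _ => by simpa only [Polynomial.eval_pow] using sq_nonneg _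

/-- The `R`-polynomial domain supports generalized gradient-based optimization: along a
formal gradient flow `dsᵢ/dt = −(∂l/∂xᵢ)(s)` over a linearly ordered commutative ring,
the formal derivative of the composite objective evaluates to a nonpositive value at
every time `t`, i.e. every generalized gradient flow is a 1-descending flow. -/
theorem formal_gradient_flow_descending {R : Type*} [CommRing R] [LinearOrder R] [IsStrictOrderedRing R]
    {n : ℕ} (hn : 0 < n)
    (l : MvPolynomial (Fin n) R) (s : Fin n → Polynomial R)
    (hs : ∀ i, Polynomial.derivative (s i) =
      -(MvPolynomial.aeval s (MvPolynomial.pderiv i l))) :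
    ∀ t : R, (Polynomial.derivative (MvPolynomial.aeval s l)).eval t ≤ 0 :=
  formal_gradient_flow_descending_general l s hs
end
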